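/- Let u be a function of the spatial variable x only, u(x,t) = u(x), with u ∈ L^1_loc(ℝ^n). Then ∫_ℝ ∫_{ℝ^n} |u(x)| / (1 + |x|^{n+2+2s} + |t|^{n/2+1+s}) dx dt is finite if and only if ∫_{ℝ^n} |u(x)| / (1 + |x|^{n+2s}) dx is finite; moreover the two quantities are comparable up to positive constants depending only on n and s. -/

import Mathlib

open MeasureTheory Real

/-- The weight integral associated with the fractional Laplacian. -/
noncomputable def spaceInt (n : ℕ) (s : ℝ) (u : EuclideanSpace ℝ (Fin n) → ℝ) : ENNReal :=
  ∫⁻ x : EuclideanSpace ℝ (Fin n), ENNReal.ofReal (|u x| / (1 + ‖x‖ ^ ((n : ℝ) + 2 * s)))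

/-- The weight integral associated with the master operator. -/
noncomputable def spaceTimeInt (n : ℕ) (s : ℝ) (u : EuclideanSpace ℝ (Fin n) → ℝ) : ENNReal :=
  ∫⁻ t : ℝ, ∫⁻ x : EuclideanSpace ℝ (Fin n),
    ENNReal.ofReal (|u x| / (1 + ‖x‖ ^ ((n : ℝ) + 2 + 2 * s) + |t| ^ ((n : ℝ) / 2 + 1 + s)))

/-!
Integrate in `t` first. The substitution `t = A^{1/b} τ` gives exactly
`∫ dt / (A + |t|^b) = C_b A^{1/b - 1}` with `C_b = ∫ dτ / (1 + |τ|^b)`, which is finite for `b > 1`.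
With `a = n + 2s`, `A = 1 + |x|^{a+2}` and `b = a/2 + 1`, the exponent is `1/b - 1 = -θ` with
`θ = a/(a+2) ∈ [0, 1]`, and `(1 + |x|^a)/2 ≤ A^θ ≤ 1 + |x|^a` by subadditivity of `y ↦ y^θ`.
So the space-time weight integrates in `t` to the spatial weight `1/(1 + |x|^a)`, up to the
factors `C_b` and `2 C_b`.
-/

open scoped ENNReal

theorem ENNReal.lt_top_iff_of_mul_le_of_le_mul {x y c₁ c₂ : ℝ≥0∞} (hc₁ : c₁ ≠ 0) (hc₂ : c₂ ≠ ∞)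
    (h₁ : c₁ * x ≤ y) (h₂ : y ≤ c₂ * x) : y < ∞ ↔ x < ∞ := by
  refine ⟨fun hy => ?_, fun hx => h₂.trans_lt (ENNReal.mul_lt_top hc₂.lt_top hx)⟩
  rcases ENNReal.mul_lt_top_iff.1 (h₁.trans_lt hy) with ⟨-, hx⟩ | hc | hx
  · exact hx
  · exact absurd hc hc₁
  · simp [hx]

theorem one_add_rpow_rpow_le {r θ : ℝ} (p : ℝ) (hr : 0 ≤ r) (hθ₀ : 0 ≤ θ) (hθ₁ : θ ≤ 1) :
    (1 + r ^ p) ^ θ ≤ 1 + r ^ (p * θ) := by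
  simpa [rpow_mul hr] using rpow_add_le_add_rpow zero_le_one (rpow_nonneg hr p) hθ₀ hθ₁

theorem one_add_rpow_mul_le {r θ : ℝ} (p : ℝ) (hr : 0 ≤ r) (hθ : 0 ≤ θ) :
    1 + r ^ (p * θ) ≤ 2 * (1 + r ^ p) ^ θ := by
  have h₁ : 1 ≤ (1 + r ^ p) ^ θ := one_le_rpow (by linarith [rpow_nonneg hr p]) hθ
  have h₂ : r ^ (p * θ) ≤ (1 + r ^ p) ^ θ := by
    rw [rpow_mul hr]
    exact rpow_le_rpow (rpow_nonneg hr p) (by linarith) hθ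
  linarith

theorem lintegral_comp_mul_left (f : ℝ → ℝ≥0∞) {c : ℝ} (hc : c ≠ 0) :
    ∫⁻ t, f (c * t) = ENNReal.ofReal |c⁻¹| * ∫⁻ t, f t :=
  calc ∫⁻ t, f (c * t) = ∫⁻ t, f t ∂(Measure.map (c * ·) volume) :=
        (lintegral_map_equiv f (MeasurableEquiv.mulLeft₀ c hc)).symm
    _ = ENNReal.ofReal |c⁻¹| * ∫⁻ t, f t := by
        rw [Real.map_volume_mul_left hc, lintegral_smul_measure]
        rfl

theorem lintegral_one_div_one_add_abs_rpow_pos (b : ℝ) :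
    0 < ∫⁻ t : ℝ, ENNReal.ofReal (1 / (1 + |t| ^ b)) := by
  have hsupp : Function.support (fun t : ℝ => ENNReal.ofReal (1 / (1 + |t| ^ b))) = Set.univ := by
    ext t
    simp only [Function.mem_support, Set.mem_univ, iff_true, ne_eq, ENNReal.ofReal_eq_zero,
      not_le]
    positivity
  rw [lintegral_pos_iff_support (by fun_prop), hsupp]
  simp

theorem lintegral_one_div_one_add_abs_rpow_lt_top {b : ℝ} (hb : 1 < b) :
    ∫⁻ t : ℝ, ENNReal.ofReal (1 / (1 + |t| ^ b)) < ∞ := by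
  have hle (t : ℝ) : 1 / (1 + |t| ^ b) ≤ 2 ^ (b - 1) * (1 + ‖t‖) ^ (-b) := by
    have h := NNReal.coe_le_coe.2 (NNReal.rpow_add_le_mul_rpow_add_rpow 1 ‖t‖₊ hb.le)
    push_cast at h
    rw [rpow_neg (by positivity), Real.norm_eq_abs, ← div_eq_mul_inv,
      div_le_div_iff₀ (by positivity) (by positivity)]
    simpa [mul_comm] using h
  calc ∫⁻ t : ℝ, ENNReal.ofReal (1 / (1 + |t| ^ b))
      ≤ ∫⁻ t : ℝ, ENNReal.ofReal (2 ^ (b - 1)) * ENNReal.ofReal ((1 + ‖t‖) ^ (-b)) := by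
        gcongr with t
        rw [← ENNReal.ofReal_mul (by positivity)]
        exact ENNReal.ofReal_le_ofReal (hle t)
    _ < ∞ := by
        rw [lintegral_const_mul _ (by fun_prop)]
        exact ENNReal.mul_lt_top ENNReal.ofReal_lt_top
          (finite_integral_one_add_norm (by simpa using hb))

theorem lintegral_div_add_abs_rpow {c A b : ℝ} (hc : 0 ≤ c) (hA : 0 < A) (hb : 0 < b) :
    ∫⁻ t : ℝ, ENNReal.ofReal (c / (A + |t| ^ b))
      = ENNReal.ofReal (c * A ^ (1 / b - 1)) * ∫⁻ t : ℝ, ENNReal.ofReal (1 / (1 + |t| ^ b)) := by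
  set R := A ^ (1 / b)
  have hR : 0 < R := rpow_pos_of_pos hA _
  have hRb : R ^ b = A := by rw [← rpow_mul hA.le, one_div_mul_cancel hb.ne', rpow_one]
  have hscale (t : ℝ) : c / (A + |t| ^ b) = c / A * (1 / (1 + |R⁻¹ * t| ^ b)) := by
    rw [abs_mul, abs_inv, abs_of_pos hR, mul_rpow (by positivity) (abs_nonneg t),
      inv_rpow hR.le, hRb]
    field_simp
  calc ∫⁻ t : ℝ, ENNReal.ofReal (c / (A + |t| ^ b))
      = ENNReal.ofReal (c / A) * ∫⁻ t : ℝ, ENNReal.ofReal (1 / (1 + |R⁻¹ * t| ^ b)) := by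
        rw [← lintegral_const_mul' _ _ ENNReal.ofReal_ne_top]
        simp_rw [hscale, ENNReal.ofReal_mul (div_nonneg hc hA.le)]
    _ = _ := by
        rw [lintegral_comp_mul_left (fun t => ENNReal.ofReal (1 / (1 + |t| ^ b)))
            (inv_ne_zero hR.ne'),
          ← mul_assoc, ← ENNReal.ofReal_mul (div_nonneg hc hA.le), inv_inv, abs_of_pos hR,
          rpow_sub hA, rpow_one, div_mul_eq_mul_div, mul_div_assoc]

section Weights

variable {a c r : ℝ}

theorem lintegral_div_one_add_rpow_add_abs_rpow (ha : 0 < a) (hc : 0 ≤ c) (hr : 0 ≤ r) :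
    ∫⁻ t : ℝ, ENNReal.ofReal (c / (1 + r ^ (a + 2) + |t| ^ (a / 2 + 1)))
      = ENNReal.ofReal (c * ((1 + r ^ (a + 2)) ^ (a / (a + 2)))⁻¹)
        * ∫⁻ t : ℝ, ENNReal.ofReal (1 / (1 + |t| ^ (a / 2 + 1))) := by
  have hexp : 1 / (a / 2 + 1) - 1 = -(a / (a + 2)) := by field_simp; ring
  rw [lintegral_div_add_abs_rpow hc (by positivity) (by positivity), hexp,
    rpow_neg (by positivity)]

theorem le_lintegral_div_one_add_rpow_add_abs_rpow (ha : 0 < a) (hc : 0 ≤ c) (hr : 0 ≤ r) :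
    (∫⁻ t : ℝ, ENNReal.ofReal (1 / (1 + |t| ^ (a / 2 + 1)))) * ENNReal.ofReal (c / (1 + r ^ a))
      ≤ ∫⁻ t : ℝ, ENNReal.ofReal (c / (1 + r ^ (a + 2) + |t| ^ (a / 2 + 1))) := by
  have hweight := one_add_rpow_rpow_le (a + 2) hr (θ := a / (a + 2)) (by positivity)
    (div_le_one_of_le₀ (by linarith) (by positivity))
  rw [mul_div_cancel₀ _ (by positivity)] at hweight
  have key : c / (1 + r ^ a) ≤ c * ((1 + r ^ (a + 2)) ^ (a / (a + 2)))⁻¹ := by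
    rw [← div_eq_mul_inv]
    exact div_le_div_of_nonneg_left hc (by positivity) hweight
  rw [lintegral_div_one_add_rpow_add_abs_rpow ha hc hr, mul_comm]
  exact mul_le_mul_left (ENNReal.ofReal_le_ofReal key) _

theorem lintegral_div_one_add_rpow_add_abs_rpow_le (ha : 0 < a) (hc : 0 ≤ c) (hr : 0 ≤ r) :
    ∫⁻ t : ℝ, ENNReal.ofReal (c / (1 + r ^ (a + 2) + |t| ^ (a / 2 + 1)))
      ≤ 2 * (∫⁻ t : ℝ, ENNReal.ofReal (1 / (1 + |t| ^ (a / 2 + 1))))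
        * ENNReal.ofReal (c / (1 + r ^ a)) := by
  have hweight := one_add_rpow_mul_le (a + 2) hr (θ := a / (a + 2)) (by positivity)
  rw [mul_div_cancel₀ _ (by positivity)] at hweight
  have key : c * ((1 + r ^ (a + 2)) ^ (a / (a + 2)))⁻¹ ≤ 2 * (c / (1 + r ^ a)) := by
    rw [← div_eq_mul_inv, mul_div_assoc', div_le_div_iff₀ (by positivity) (by positivity)]
    nlinarith
  rw [lintegral_div_one_add_rpow_add_abs_rpow ha hc hr, mul_comm, mul_comm 2, mul_assoc,
    ← ENNReal.ofReal_ofNat 2, ← ENNReal.ofReal_mul zero_le_two]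
  exact mul_le_mul_right (ENNReal.ofReal_le_ofReal key) _

end Weights

theorem spaceTimeInt_eq_lintegral_lintegral {n : ℕ} {s : ℝ} {u : EuclideanSpace ℝ (Fin n) → ℝ}
    (hu : AEMeasurable u volume) :
    spaceTimeInt n s u = ∫⁻ x : EuclideanSpace ℝ (Fin n), ∫⁻ t : ℝ,
      ENNReal.ofReal
        (|u x| / (1 + ‖x‖ ^ (((n : ℝ) + 2 * s) + 2) + |t| ^ (((n : ℝ) + 2 * s) / 2 + 1))) := by
  rw [spaceTimeInt, show (n : ℝ) + 2 + 2 * s = ((n : ℝ) + 2 * s) + 2 by ring,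
    show (n : ℝ) / 2 + 1 + s = ((n : ℝ) + 2 * s) / 2 + 1 by ring]
  refine lintegral_lintegral_swap ?_
  have hu' : AEMeasurable (fun p : ℝ × EuclideanSpace ℝ (Fin n) => u p.2) (volume.prod volume) :=
    hu.comp_quasiMeasurePreserving Measure.quasiMeasurePreserving_snd
  exact ((continuous_abs.measurable.comp_aemeasurable hu').div (by fun_prop)).ennreal_ofReal

theorem stmt3_general (n : ℕ) (s : ℝ) (hs : s ∈ Set.Ioo (0 : ℝ) 1) :
    ∃ c₁ c₂ : ENNReal, 0 < c₁ ∧ c₂ < ⊤ ∧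
      ∀ u : EuclideanSpace ℝ (Fin n) → ℝ, MeasureTheory.LocallyIntegrable u volume →
        (spaceTimeInt n s u < ⊤ ↔ spaceInt n s u < ⊤)
        ∧ c₁ * spaceInt n s u ≤ spaceTimeInt n s u
        ∧ spaceTimeInt n s u ≤ c₂ * spaceInt n s u := by
  have ha : 0 < (n : ℝ) + 2 * s := by linarith [hs.1, (Nat.cast_nonneg n : (0 : ℝ) ≤ n)]
  set C := ∫⁻ t : ℝ, ENNReal.ofReal (1 / (1 + |t| ^ (((n : ℝ) + 2 * s) / 2 + 1)))
  have hC_pos : 0 < C := lintegral_one_div_one_add_abs_rpow_pos _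
  have hC_lt_top : C < ⊤ := lintegral_one_div_one_add_abs_rpow_lt_top (by linarith)
  have h2C_ne_top : 2 * C ≠ ⊤ := ENNReal.mul_ne_top ENNReal.ofNat_ne_top hC_lt_top.ne
  refine ⟨C, 2 * C, hC_pos, h2C_ne_top.lt_top, fun u hu => ?_⟩
  have hu' := hu.aestronglyMeasurable.aemeasurable
  have hlower : C * spaceInt n s u ≤ spaceTimeInt n s u := by
    rw [spaceTimeInt_eq_lintegral_lintegral hu', spaceInt]
    exact (lintegral_const_mul_le C _).trans <| lintegral_mono fun x =>
      le_lintegral_div_one_add_rpow_add_abs_rpow ha (abs_nonneg (u x)) (norm_nonneg x)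
  have hupper : spaceTimeInt n s u ≤ 2 * C * spaceInt n s u := by
    rw [spaceTimeInt_eq_lintegral_lintegral hu', spaceInt, ← lintegral_const_mul' _ _ h2C_ne_top]
    exact lintegral_mono fun x =>
      lintegral_div_one_add_rpow_add_abs_rpow_le ha (abs_nonneg (u x)) (norm_nonneg x)
  exact ⟨ENNReal.lt_top_iff_of_mul_le_of_le_mul hC_pos.ne' h2C_ne_top hlower hupper,
    hlower, hupper⟩

theorem stmt3 (n : ℕ) (hn : 1 ≤ n) (s : ℝ) (hs : s ∈ Set.Ioo (0 : ℝ) 1) :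
    ∃ c₁ c₂ : ENNReal, 0 < c₁ ∧ c₂ < ⊤ ∧
      ∀ u : EuclideanSpace ℝ (Fin n) → ℝ, MeasureTheory.LocallyIntegrable u volume →
        (spaceTimeInt n s u < ⊤ ↔ spaceInt n s u < ⊤)
        ∧ c₁ * spaceInt n s u ≤ spaceTimeInt n s u
        ∧ spaceTimeInt n s u ≤ c₂ * spaceInt n s u :=
  stmt3_general n s hs
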